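/- arXiv:2012.05530 — 6 statements merged into one kernel-verified Lean document; each statement's English description precedes it below -/
import Mathlib

section
/- With the setup of the previous abstraction (q : ℕ → ℤ, q(0) = p ≥ 0, q non-increasing and non-negative, second differences ℓ(n) = q(n-1) - 2q(n) + q(n+1) ≥ 0 for n ≥ 1, nr = min{n ≥ 1 : q(n-1) - q(n) = q(n) - q(n+1)}), suppose nr = p - q(1) + 1 =: r. Then ℓ(n) = 1 for all 1 ≤ n ≤ r - 1, q(r-1) = q(m) for all m ≥ r - 1, the number br = min{n ≥ 1 : q(n-1) = q(n)} equals r, and p - q(m) = r(r-1)/2 for all m ≥ r - 1. -/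
/-- Abstracts the equality case of Theorem 2.7: if `nr = p - q(1) + 1 = r`, then all the
"lengths" `ℓ(n) = q(n-1) - 2q(n) + q(n+1)` equal 1 for `1 ≤ n ≤ r-1`, `q` stabilizes at
`q(r-1)`, `br = nr = r`, and `p - q(∞) = r(r-1)/2`. -/
theorem stmt_2 (p : ℤ) (hp : 0 ≤ p) (q : ℕ → ℤ) (h0 : q 0 = p)
    (hmono : ∀ n, q (n + 1) ≤ q n) (hnonneg : ∀ n, 0 ≤ q n)
    (hsec : ∀ n : ℕ, 1 ≤ n → 0 ≤ q (n - 1) - 2 * q n + q (n + 1))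
    (nr : ℕ) (hnr1 : 1 ≤ nr)
    (hnr : q (nr - 1) - q nr = q nr - q (nr + 1))
    (hnrmin : ∀ n : ℕ, 1 ≤ n → q (n - 1) - q n = q n - q (n + 1) → nr ≤ n)
    (br : ℕ) (hbr1 : 1 ≤ br) (hbr : q (br - 1) = q br)
    (hbrmin : ∀ n : ℕ, 1 ≤ n → q (n - 1) = q n → br ≤ n)
    (r : ℕ) (hr : r = nr) (heq : (nr : ℤ) = p - q 1 + 1) :
    (∀ n : ℕ, 1 ≤ n → n ≤ r - 1 → q (n - 1) - 2 * q n + q (n + 1) = 1) ∧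
    (∀ m : ℕ, r - 1 ≤ m → q m = q (r - 1)) ∧
    br = r ∧
    (∀ m : ℕ, r - 1 ≤ m → p - q m = (r : ℤ) * (r - 1) / 2) := by
  subst hr
  set a := r - 1 with ha
  have hnra : r = a + 1 := by omega
  -- d n := q n - q (n+1)
  have hd : ∀ n, 0 ≤ q n - q (n + 1) := fun n => by linarith [hmono n]
  have hdmono : ∀ n, q (n + 1) - q (n + 2) ≤ q n - q (n + 1) := by
    intro n
    have := hsec (n + 1) (by omega)
    simp only [Nat.add_sub_cancel] at this
    linarith
  have hstrict : ∀ k, k + 1 < r → q (k + 1) - q (k + 2) + 1 ≤ q k - q (k + 1) := by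
    intro k hk
    by_contra h
    have heqd : q k - q (k + 1) = q (k + 1) - q (k + 2) := le_antisymm (by linarith) (hdmono k)
    have := hnrmin (k + 1) (by omega) (by simpa [Nat.add_sub_cancel] using heqd)
    omega
  -- base value of d 0
  have hca : (r : ℤ) = (a : ℤ) + 1 := by exact_mod_cast congrArg (Nat.cast : ℕ → ℤ) hnra
  have hd0 : q 0 - q 1 = (a : ℤ) := by rw [h0]; linarith [heq]
  -- upper bound
  have hub : ∀ k, k ≤ a → q k - q (k + 1) ≤ (a : ℤ) - k := by
    intro k
    induction k with
    | zero => intro _; simp [hd0]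
    | succ k ih =>
      intro hk
      have h1 := hstrict k (by omega)
      have h2 := ih (by omega)
      push_cast
      push_cast at h2
      linarith
  have hda : q a - q (a + 1) = 0 := by
    have := hub a le_rfl
    have := hd a
    omega
  -- lower bound
  have hlb : ∀ j, j ≤ a → (j : ℤ) ≤ q (a - j) - q (a - j + 1) := by
    intro j
    induction j with
    | zero => intro _; simpa using hd a
    | succ j ih =>
      intro hj
      have e1 : a - (j + 1) + 1 = a - j := by omega
      have e2 : a - (j + 1) + 2 = a - j + 1 := by omega
      have h1 := hstrict (a - (j + 1)) (by omega)
      rw [e1, e2] at h1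
      have h2 := ih (by omega)
      push_cast
      rw [e1]
      linarith
  have hdv : ∀ k, k ≤ a → q k - q (k + 1) = (a : ℤ) - k := by
    intro k hk
    have h1 := hub k hk
    have h2 := hlb (a - k) (by omega)
    have e1 : a - (a - k) = k := by omega
    rw [e1] at h2
    have : ((a - k : ℕ) : ℤ) = (a : ℤ) - k := by
      push_cast [Nat.cast_sub hk]; ring
    omega
  -- stabilization
  have hchain : ∀ j, q (a + j) - q (a + j + 1) ≤ q a - q (a + 1) := by
    intro j
    induction j with
    | zero => simp
    | succ j ih =>
      have h := hdmono (a + j)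
      have e1 : a + (j + 1) = a + j + 1 := rfl
      rw [e1, show a + j + 1 + 1 = a + j + 2 from rfl]
      linarith
  have hstabj : ∀ j, q (a + j) = q a := by
    intro j
    induction j with
    | zero => simp
    | succ j ih =>
      have h1 := hchain j
      have h2 := hd (a + j)
      have e1 : a + (j + 1) = a + j + 1 := rfl
      rw [e1]
      linarith
  have hstab : ∀ m, a ≤ m → q m = q a := by
    intro m hm
    have : m = a + (m - a) := by omega
    rw [this]
    exact hstabj (m - a)
  -- sum formula
  have haux : ∀ j, j ≤ a → 2 * (p - q j) = (j : ℤ) * (2 * (a : ℤ) + 1 - j) := by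
    intro j
    induction j with
    | zero => intro _; simp [h0]
    | succ j ih =>
      intro hj
      have h1 := ih (by omega)
      have h2 := hdv j (by omega)
      push_cast
      linear_combination h1 + 2 * h2
  refine ⟨?_, ?_, ?_, ?_⟩
  · intro n hn1 hn2
    obtain ⟨k, rfl⟩ : ∃ k, n = k + 1 := ⟨n - 1, by omega⟩
    simp only [Nat.add_sub_cancel]
    have h1 := hdv k (by omega)
    have h2 := hdv (k + 1) (by omega)
    push_cast at h1 h2
    linarith
  · intro m hm; exact hstab m hm
  · -- br = r
    have hble : br ≤ r := by
      apply hbrmin r hnr1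
      rw [← ha, hnra]
      omega
    by_contra h
    have hbrlt : br < r := by omega
    obtain ⟨k, rfl⟩ : ∃ k, br = k + 1 := ⟨br - 1, by omega⟩
    simp only [Nat.add_sub_cancel] at hbr
    have hv := hdv k (by omega)
    have : (a : ℤ) - k ≥ 1 := by
      have hk1 : k + 1 ≤ a := by omega
      have : (k : ℤ) + 1 ≤ (a : ℤ) := by exact_mod_cast hk1
      linarith
    omega
  · intro m hm
    have h1 := hstab m hm
    have h2 := haux a le_rfl
    rw [h1]
    have h3 : (r : ℤ) * ((r : ℤ) - 1) = 2 * (p - q a) := by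
      rw [hca]; linear_combination -h2
    rw [h3]
    omega
end

section
/- Let (A, m) be a two-dimensional Cohen–Macaulay local ring, I an m-primary ideal, Q = (a,b) a minimal reduction of I generated by a regular sequence, and {I_n}_{n≥0} a filtration with I_0 = A, I_1 = I, I_{n+1} ⊆ I_n, I_m · I_n ⊆ I_{m+n}. Suppose I_{n+1} : a = I_n for all n ≥ 0, I_2 ∩ Q = Q·I_1, and I_{n+1} = Q·I_n for all n ≥ 2. Then the images a*, b* of a, b in the associated graded ring G = ⊕_{n≥0} I_n/I_{n+1} form a regular sequence, and hence G is Cohen–Macaulay. -/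
lemma pair_mul_mem {A : Type*} [CommRing A] (a b : A) (J : Ideal A) {z : A}
    (hz : z ∈ Ideal.span {a, b} * J) : ∃ u ∈ J, ∃ v ∈ J, z = a * u + b * v := by
  have hsp : Ideal.span ({a, b} : Set A) = Ideal.span {a} ⊔ Ideal.span {b} := by
    rw [Ideal.span_insert]
  rw [hsp, Ideal.sup_mul] at hz
  rcases Submodule.mem_sup.mp hz with ⟨s, hs, t, ht, hst⟩
  rcases Ideal.mem_span_singleton_mul.mp hs with ⟨u, hu, hsu⟩
  rcases Ideal.mem_span_singleton_mul.mp ht with ⟨v, hv, htv⟩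
  exact ⟨u, hu, v, hv, by rw [← hst, ← hsu, ← htv]⟩

/-- Abstracts (1) ⇒ (5) of Theorem 3.2 at the level of the filtration: for a filtration
`{Iₙ}` with minimal reduction `Q = (a,b)` (a regular sequence) satisfying
`I_{n+1} : a = I_n`, `I₂ ∩ Q = Q·I₁` and `I_{n+1} = Q·I_n` for `n ≥ 2`, the initial forms
`a*, b*` form a regular sequence on the associated graded ring
`G = ⊕ I_n/I_{n+1}` (expressed at the filtration level), hence `G` is Cohen–Macaulay. -/
theorem stmt_3 {A : Type*} [CommRing A] [IsLocalRing A] [IsNoetherianRing A]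
    (hdim : ringKrullDim A = 2)
    (a b : A)
    -- a, b is a regular sequence generating a proper ideal Q
    (hreg1 : ∀ x : A, a * x = 0 → x = 0)
    (hreg2 : ∀ x : A, b * x ∈ Ideal.span {a} → x ∈ Ideal.span {a})
    (Q : Ideal A) (hQ : Q = Ideal.span {a, b}) (hQtop : Q ≠ ⊤)
    (I : ℕ → Ideal A) (hI0 : I 0 = ⊤) (hdecr : ∀ n, I (n + 1) ≤ I n)
    (hmul : ∀ m n, I m * I n ≤ I (m + n))
    (hprim : ∀ n, 1 ≤ n → (I n).radical = IsLocalRing.maximalIdeal A)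
    (hQI : Q ≤ I 1)
    -- I_{n+1} : a = I_n
    (hcolon : ∀ n : ℕ, ∀ x : A, a * x ∈ I (n + 1) → x ∈ I n)
    -- Huneke–Itoh intersection: I₂ ∩ Q = Q·I₁
    (hint : I 2 ⊓ Q = Q * I 1)
    -- br = 2 : I_{n+1} = Q·I_n for n ≥ 2
    (hred : ∀ n : ℕ, 2 ≤ n → I (n + 1) = Q * I n) :
    -- a* is a nonzerodivisor on G:
    (∀ n : ℕ, ∀ x ∈ I n, a * x ∈ I (n + 2) → x ∈ I (n + 1)) ∧
    -- b* is a nonzerodivisor on G/(a*)G (so a*, b* is a regular sequence and G is CM):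
    (∀ n : ℕ, ∀ x ∈ I n, b * x ∈ Ideal.span {a} * I n + I (n + 2) →
      x ∈ Ideal.span {a} * I (n - 1) + I (n + 1)) := by
  have haQ : a ∈ Q := by rw [hQ]; exact Ideal.subset_span (by simp)
  have hbQ : b ∈ Q := by rw [hQ]; exact Ideal.subset_span (by simp)
  constructor
  · intro n x _ hax
    exact hcolon (n + 1) x hax
  · intro n x hx hbx
    rcases Submodule.mem_sup.mp hbx with ⟨s, hs, z, hz, hsz⟩
    rcases Ideal.mem_span_singleton_mul.mp hs with ⟨y, hy, hsy⟩
    rw [← hsy] at hsz   -- hsz : a * y + z = b * x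
    have key : ∃ u ∈ I (n + 1), ∃ v ∈ I (n + 1), z = a * u + b * v := by
      rcases Nat.eq_zero_or_pos n with h0 | hpos
      · subst h0
        have hzQ : z ∈ Q := by
          have hz' : z = b * x - a * y := by linear_combination hsz
          rw [hz']
          exact Q.sub_mem (Q.mul_mem_right x hbQ) (Q.mul_mem_right y haQ)
        have hzm : z ∈ Q * I 1 := hint ▸ ⟨hz, hzQ⟩
        rw [hQ] at hzm
        exact pair_mul_mem a b (I 1) hzm
      · have h2 : 2 ≤ n + 1 := by omega
        have hzm : z ∈ Q * I (n + 1) := (hred (n + 1) h2) ▸ hz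
        rw [hQ] at hzm
        exact pair_mul_mem a b (I (n + 1)) hzm
    rcases key with ⟨u, hu, v, hv, hzuv⟩
    have heq : b * (x - v) = a * (y + u) := by linear_combination hzuv - hsz
    have hxva : x - v ∈ Ideal.span {a} := by
      apply hreg2
      rw [heq]
      exact Ideal.mem_span_singleton.mpr ⟨y + u, rfl⟩
    rcases Ideal.mem_span_singleton.mp hxva with ⟨w, hw⟩
    -- hw : x - v = a * w
    have hawIn : a * w ∈ I n := by
      rw [← hw]; exact (I n).sub_mem hx (hdecr n hv)
    have hwIn1 : w ∈ I (n - 1) := by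
      rcases Nat.eq_zero_or_pos n with h0 | hpos
      · simp [h0, hI0]
      · have hn : n - 1 + 1 = n := by omega
        exact hcolon (n - 1) w (by rw [hn]; exact hawIn)
    have hx_eq : x = a * w + v := by linear_combination hw
    rw [hx_eq]
    exact Submodule.add_mem_sup (Ideal.mem_span_singleton_mul.mpr ⟨w, hwIn1, rfl⟩) hv
end

section
/- Let q : ℕ → ℤ with q(0) = p, 0 ≤ q(n+1) ≤ q(n), and second differences ℓ(n) = q(n-1) - 2q(n) + q(n+1) ≥ 0 for all n ≥ 1. Define e₂ = Σ_{n≥1} n·ℓ(n) and e₁' = Σ_{n≥1} ℓ(n) (both finite sums since ℓ(n) = 0 for large n). Suppose Σ_{n≥1} ℓ(n) = 1 and min{n : q(n-1)-q(n) = q(n)-q(n+1)} = min{n : q(n-1) = q(n)}. Then ℓ(1) = 1 and ℓ(n) = 0 for n ≥ 2, i.e., e₂ = 1. -/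
/-- Abstracts (4) ⇒ (1) in Theorem 3.9: if `Σ_{n≥1} ℓ(n) = 1` (i.e. `ē₁ = e₀ - ℓ(A/I) + 1`)
and `nr = br`, then `ℓ(1) = 1`, `ℓ(n) = 0` for `n ≥ 2`, and `ē₂ = Σ_{n≥1} n·ℓ(n) = 1`. -/
theorem stmt_8 (p : ℤ) (q : ℕ → ℤ) (h0 : q 0 = p)
    (hmono : ∀ n, q (n + 1) ≤ q n) (hnonneg : ∀ n, 0 ≤ q n)
    (L : ℕ → ℤ) (hL : ∀ n : ℕ, 1 ≤ n → L n = q (n - 1) - 2 * q n + q (n + 1))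
    (hLnonneg : ∀ n : ℕ, 1 ≤ n → 0 ≤ L n)
    (N : ℕ) (hN : ∀ n : ℕ, N ≤ n → L n = 0)
    (hsum : ∑ n ∈ Finset.Icc 1 N, L n = 1)
    (nr : ℕ) (hnr1 : 1 ≤ nr)
    (hnr : q (nr - 1) - q nr = q nr - q (nr + 1))
    (hnrmin : ∀ n : ℕ, 1 ≤ n → q (n - 1) - q n = q n - q (n + 1) → nr ≤ n)
    (br : ℕ) (hbr1 : 1 ≤ br) (hbr : q (br - 1) = q br)
    (hbrmin : ∀ n : ℕ, 1 ≤ n → q (n - 1) = q n → br ≤ n)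
    (heq : nr = br) :
    L 1 = 1 ∧ (∀ n : ℕ, 2 ≤ n → L n = 0) ∧ ∑ n ∈ Finset.Icc 1 N, (n : ℤ) * L n = 1 := by
  set d : ℕ → ℤ := fun n => q n - q (n + 1) with hd
  have hLd : ∀ n : ℕ, 1 ≤ n → L n = d (n - 1) - d n := by
    intro n hn
    obtain ⟨m, rfl⟩ := Nat.exists_eq_add_of_le hn
    rw [hL _ hn]
    simp only [hd]
    have e1 : 1 + m - 1 = m := by omega
    have e2 : 1 + m + 1 = m + 1 + 1 := by omega
    have e3 : 1 + m = m + 1 := by omega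
    rw [e1, e2, e3]
    ring
  have hdnonneg : ∀ n, 0 ≤ d n := fun n => by
    simp only [hd]; linarith [hmono n]
  -- telescoping
  have htel : ∑ n ∈ Finset.Icc 1 N, L n = d 0 - d N := by
    rw [← Finset.Ico_add_one_right_eq_Icc, Finset.sum_Ico_eq_sum_range]
    have h1 : N + 1 - 1 = N := by omega
    rw [h1]
    have h2 : ∀ i ∈ Finset.range N, L (1 + i) = d i - d (i + 1) := by
      intro i _
      rw [hLd (1 + i) (by omega)]
      congr 2 <;> omega
    rw [Finset.sum_congr rfl h2, Finset.sum_range_sub' d N]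
  -- d is eventually constant equal to d N
  have hdconst : ∀ k, d (N + k) = d N := by
    intro k
    induction k with
    | zero => rfl
    | succ k ih =>
      have h1 : L (N + k + 1) = 0 := hN _ (by omega)
      have h2 := hLd (N + k + 1) (by omega)
      have h3 : N + k + 1 - 1 = N + k := by omega
      rw [h3, h1] at h2
      have : N + (k + 1) = N + k + 1 := by omega
      rw [this]
      linarith
  -- q along the tail
  have hqtail : ∀ k : ℕ, q (N + k) = q N - k * d N := by
    intro k
    induction k with
    | zero => simp
    | succ k ih =>
      have h1 : d (N + k) = d N := hdconst k
      have h2 : d (N + k) = q (N + k) - q (N + k + 1) := rfl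
      have : N + (k + 1) = N + k + 1 := by omega
      rw [this]
      push_cast
      linarith
  -- d N = 0
  have hdN0 : d N = 0 := by
    by_contra h
    have hpos : 1 ≤ d N := by
      have := hdnonneg N; omega
    set k : ℕ := (q N).toNat + 1 with hk
    have hkge : (q N : ℤ) + 1 ≤ (k : ℤ) := by
      have := Int.self_le_toNat (q N)
      push_cast [hk]
      omega
    have := hqtail k
    have hnn := hnonneg (N + k)
    nlinarith
  have hd0 : d 0 = 1 := by rw [htel] at hsum; linarith
  -- N ≥ 1
  have hN1 : 1 ≤ N := by
    rcases Nat.eq_zero_or_pos N with h | h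
    · subst h; simp at hsum
    · exact h
  have h1mem : 1 ∈ Finset.Icc 1 N := Finset.mem_Icc.mpr ⟨le_rfl, hN1⟩
  -- L 1 = 1
  have hL1 : L 1 = 1 := by
    have hub : L 1 ≤ 1 := by
      rw [← hsum]
      exact Finset.single_le_sum
        (fun i hi => hLnonneg i (Finset.mem_Icc.mp hi).1) h1mem
    have hlb : 0 ≤ L 1 := hLnonneg 1 le_rfl
    by_contra hne
    have hL10 : L 1 = 0 := by omega
    have hL1' := hL 1 le_rfl
    simp only [Nat.sub_self] at hL1'
    have hcond : q 0 - q 1 = q 1 - q 2 := by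
      rw [hL10] at hL1'; linarith
    have hnrle : nr ≤ 1 := hnrmin 1 le_rfl (by simpa using hcond)
    have hnr1' : nr = 1 := le_antisymm hnrle hnr1
    have hbr1' : br = 1 := heq ▸ hnr1'
    rw [hbr1'] at hbr
    simp only [Nat.sub_self] at hbr
    have : d 0 = q 0 - q 1 := rfl
    rw [hbr] at this
    omega
  -- rest zero in Icc 2 N
  have hsplit : Finset.Icc 1 N = insert 1 (Finset.Icc 2 N) := by
    ext a
    simp only [Finset.mem_Icc, Finset.mem_insert]
    omega
  have hnotmem : (1 : ℕ) ∉ Finset.Icc 2 N := by simp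
  have hrest : ∑ n ∈ Finset.Icc 2 N, L n = 0 := by
    rw [hsplit, Finset.sum_insert hnotmem, hL1] at hsum
    linarith
  have hzero : ∀ n ∈ Finset.Icc 2 N, L n = 0 := by
    have := (Finset.sum_eq_zero_iff_of_nonneg
      (fun i hi => hLnonneg i (by have := (Finset.mem_Icc.mp hi).1; omega))).mp hrest
    exact this
  have hall : ∀ n : ℕ, 2 ≤ n → L n = 0 := by
    intro n hn
    by_cases h : n ≤ N
    · exact hzero n (Finset.mem_Icc.mpr ⟨hn, h⟩)
    · exact hN n (by omega)
  refine ⟨hL1, hall, ?_⟩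
  rw [Finset.sum_eq_single_of_mem 1 h1mem]
  · rw [hL1]; ring
  · intro b hb hb1
    have : L b = 0 := hall b (by
      have := (Finset.mem_Icc.mp hb).1; omega)
    rw [this]; ring
end

section
/- Let G = ⊕_{n≥0} G_n be a Noetherian graded ring with G_0 Artinian local, of dimension 2, Cohen–Macaulay, with a-invariant a(G) = 0, arising as the associated graded ring of a filtration {I_n} with regular sequence reduction (a*, b*) of degree 1. Then the reduction number satisfies: I_{n+1} = (a,b)·I_n for all n ≥ 2, i.e., br = a(G) + dim G = 2. -/
/-- Abstracts (5) ⇒ (1) of Theorem 3.2 at the level of the filtration: if the associated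
graded ring `G = ⊕ I_n/I_{n+1}` of a good filtration `{Iₙ}` is Cohen–Macaulay (the initial
forms `a*, b*` of degree 1 form a regular sequence on `G`) with `a`-invariant `0`
(i.e. `[G/(a*,b*)G]_{n+1} = 0` for `n ≥ 2`), then `I_{n+1} = (a,b)·I_n` for all `n ≥ 2`,
i.e. the reduction number is `br = a(G) + dim G = 2`. -/
theorem stmt_10 {A : Type*} [CommRing A] [IsLocalRing A] [IsNoetherianRing A]
    (hdim : ringKrullDim A = 2)
    (a b : A) (Q : Ideal A) (hQ : Q = Ideal.span {a, b}) (hQtop : Q ≠ ⊤)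
    (I : ℕ → Ideal A) (hI0 : I 0 = ⊤) (hdecr : ∀ n, I (n + 1) ≤ I n)
    (hmul : ∀ m n, I m * I n ≤ I (m + n))
    (hprim : ∀ n, 1 ≤ n → (I n).radical = IsLocalRing.maximalIdeal A)
    (hQI : Q ≤ I 1)
    -- the filtration is a good filtration
    (hgood : ∃ N : ℕ, ∀ n : ℕ, N ≤ n → I (n + 1) = I 1 * I n)
    -- a*, b* is a regular sequence of degree-one elements on G (G is Cohen–Macaulay)
    (hga : ∀ n : ℕ, ∀ x ∈ I n, a * x ∈ I (n + 2) → x ∈ I (n + 1))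
    (hgb : ∀ n : ℕ, ∀ x ∈ I n, b * x ∈ Ideal.span {a} * I n + I (n + 2) →
      x ∈ Ideal.span {a} * I (n - 1) + I (n + 1))
    -- a(G) = 0 : the Artinian reduction G/(a*,b*)G vanishes in degrees ≥ 3
    (hainv : ∀ n : ℕ, 2 ≤ n → I (n + 1) ≤ Q * I n + I (n + 2)) :
    ∀ n : ℕ, 2 ≤ n → I (n + 1) = Q * I n := by
  obtain ⟨N, hN⟩ := hgood
  -- antitone
  have hanti : ∀ m n : ℕ, m ≤ n → I n ≤ I m := by
    intro m n h
    induction n with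
    | zero => simpa [Nat.le_zero.mp h] using le_refl (I 0)
    | succ k ih =>
      rcases Nat.lt_or_ge m (k+1) with h' | h'
      · exact (hdecr k).trans (ih (Nat.lt_succ_iff.mp h'))
      · have : m = k + 1 := le_antisymm h h'
        simp [this]
  -- I 1 ≤ maximal ideal
  have hI1ne : I 1 ≠ ⊤ := by
    intro h
    have := hprim 1 le_rfl
    rw [h, Ideal.radical_top] at this
    exact (IsLocalRing.maximalIdeal.isMaximal A).ne_top this.symm
  have hI1m : I 1 ≤ IsLocalRing.maximalIdeal A := by
    have := hprim 1 le_rfl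
    calc I 1 ≤ (I 1).radical := Ideal.le_radical
    _ = _ := this
  -- I (N + k) ≤ m ^ k
  have hIm : ∀ k : ℕ, I (N + k) ≤ (IsLocalRing.maximalIdeal A) ^ k := by
    intro k
    induction k with
    | zero => simp
    | succ k ih =>
      have : I (N + k + 1) = I 1 * I (N + k) := hN (N + k) (Nat.le_add_right _ _)
      rw [show N + (k+1) = N + k + 1 from rfl, this, pow_succ,
        mul_comm ((IsLocalRing.maximalIdeal A)^k)]
      exact Ideal.mul_mono hI1m ih
  intro n hn
  refine le_antisymm ?_ ?_
  swap
  · calc Q * I n ≤ I 1 * I n := Ideal.mul_mono_left hQI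
      _ ≤ I (1 + n) := hmul 1 n
      _ = I (n + 1) := by rw [Nat.add_comm]
  -- main inclusion: I (n+1) ≤ Q * I n + I m for all m ≥ n + 2
  have key : ∀ m : ℕ, n + 2 ≤ m → I (n + 1) ≤ Q * I n + I m := by
    intro m hm
    induction m with
    | zero => omega
    | succ m ih =>
      rcases Nat.lt_or_ge (n + 2) (m + 1) with h' | h'
      · have hm2 : 2 ≤ m := by omega
        have h1 : I (n + 1) ≤ Q * I n + I m := ih (by omega)
        have h2 : I m = I (m - 1 + 1) := by congr 1; omega
        have h3 : I m ≤ Q * I (m - 1) + I (m + 1) := by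
          rw [h2]
          have := hainv (m - 1) (by omega)
          have e1 : m - 1 + 2 = m + 1 := by omega
          rw [e1] at this
          exact this
        have h4 : Q * I (m - 1) ≤ Q * I n := Ideal.mul_mono_right (hanti n (m-1) (by omega))
        calc I (n + 1) ≤ Q * I n + I m := h1
          _ ≤ Q * I n + (Q * I (m-1) + I (m + 1)) := add_le_add le_rfl h3
          _ = (Q * I n + Q * I (m-1)) + I (m + 1) := by rw [add_assoc]
          _ ≤ Q * I n + I (m + 1) := add_le_add (sup_le le_rfl h4) le_rfl
      · have : m + 1 = n + 2 := by omega
        rw [this]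
        exact hainv n hn
  -- hence I (n+1) ≤ Q * I n + m^k for all k
  set J : Ideal A := Q * I n with hJ
  have hkey2 : ∀ k : ℕ, I (n + 1) ≤ J + (IsLocalRing.maximalIdeal A) ^ k := by
    intro k
    have h1 : I (n + 1) ≤ J + I (N + (k + n + 2)) := key _ (by omega)
    have h2 : I (N + (k + n + 2)) ≤ (IsLocalRing.maximalIdeal A) ^ (k + n + 2) := hIm _
    have h3 : (IsLocalRing.maximalIdeal A) ^ (k + n + 2) ≤ (IsLocalRing.maximalIdeal A) ^ k :=
      Ideal.pow_le_pow_right (by omega)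
    exact h1.trans (add_le_add le_rfl (h2.trans h3))
  -- pass to the quotient A ⧸ J
  have hJle : J ≤ Q := Ideal.mul_le_left
  have hJtop : J ≠ ⊤ := fun h => hQtop (top_le_iff.mp (h ▸ hJle))
  have hJm : J ≤ IsLocalRing.maximalIdeal A := hJle.trans (hQI.trans hI1m)
  haveI : Nontrivial (A ⧸ J) := Ideal.Quotient.nontrivial_iff.mpr hJtop
  haveI : IsLocalRing (A ⧸ J) := IsLocalRing.of_surjective' _ Ideal.Quotient.mk_surjective
  intro x hx
  have hmapm : (IsLocalRing.maximalIdeal A).map (Ideal.Quotient.mk J) ≤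
      IsLocalRing.maximalIdeal (A ⧸ J) := by
    apply IsLocalRing.le_maximalIdeal
    intro h
    have hc := Ideal.comap_map_of_surjective (Ideal.Quotient.mk J)
      Ideal.Quotient.mk_surjective (IsLocalRing.maximalIdeal A)
    rw [h, Ideal.comap_top, ← RingHom.ker_eq_comap_bot, Ideal.mk_ker, sup_eq_left.mpr hJm] at hc
    exact (IsLocalRing.maximalIdeal.isMaximal A).ne_top hc.symm
  have hbot : (⨅ k : ℕ, (IsLocalRing.maximalIdeal (A ⧸ J)) ^ k) = ⊥ :=
    Ideal.iInf_pow_eq_bot_of_isLocalRing _ (IsLocalRing.maximalIdeal.isMaximal _).ne_top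
  have hπx : Ideal.Quotient.mk J x ∈ (⊥ : Ideal (A ⧸ J)) := by
    rw [← hbot]
    refine Submodule.mem_iInf _ |>.mpr fun k => ?_
    have hx' : x ∈ J + (IsLocalRing.maximalIdeal A) ^ k := hkey2 k hx
    obtain ⟨y, hy, z, hz, rfl⟩ := Submodule.mem_sup.mp hx'
    have h1 : Ideal.Quotient.mk J y = 0 := Ideal.Quotient.eq_zero_iff_mem.mpr hy
    have h2 : Ideal.Quotient.mk J z ∈ ((IsLocalRing.maximalIdeal A) ^ k).map
        (Ideal.Quotient.mk J) := Ideal.mem_map_of_mem _ hz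
    have h3 : ((IsLocalRing.maximalIdeal A) ^ k).map (Ideal.Quotient.mk J) ≤
        (IsLocalRing.maximalIdeal (A ⧸ J)) ^ k := by
      rw [Ideal.map_pow]
      exact Ideal.pow_right_mono hmapm k
    rw [map_add, h1, zero_add]
    exact h3 h2
  rwa [Submodule.mem_bot, Ideal.Quotient.eq_zero_iff_mem] at hπx
end

section
/- Let a = p - q₁ ≥ 0 where p = q(0) and q₁ = q(1) for a sequence q : ℕ → ℤ that is non-increasing with non-negative, non-increasing first differences Δq(n) = q(n) - q(n+1). Then Δq(0) = a implies nr - 1 ≤ Δq(0), i.e., nr ≤ a + 1, where nr = min{n ≥ 1 : Δq(n-1) = Δq(n)}; and nr = a + 1 holds if and only if Δq(n) = a - n for 0 ≤ n ≤ a and Δq(n) = 0 for n ≥ a. -/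
/-- Core combinatorial lemma in the proof of Theorem 2.7: for a non-increasing sequence
of non-negative first differences `Δq` starting at `Δq(0) = a`, the first repetition index
`nr` satisfies `nr ≤ a + 1`, with equality iff `Δq` is the strict staircase
`a, a-1, …, 1, 0, 0, …`. -/
theorem stmt_18 (q : ℕ → ℤ)
    (hnonneg : ∀ n, 0 ≤ q n - q (n + 1))
    (hdec : ∀ n, q (n + 1) - q (n + 2) ≤ q n - q (n + 1))
    (a : ℕ) (ha : (a : ℤ) = q 0 - q 1)
    (nr : ℕ) (hnr1 : 1 ≤ nr)
    (hnr : q (nr - 1) - q nr = q nr - q (nr + 1))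
    (hnrmin : ∀ n : ℕ, 1 ≤ n → q (n - 1) - q n = q n - q (n + 1) → nr ≤ n) :
    nr ≤ a + 1 ∧
    (nr = a + 1 ↔
      ((∀ n : ℕ, n ≤ a → q n - q (n + 1) = (a : ℤ) - n) ∧
        ∀ n : ℕ, a ≤ n → q n - q (n + 1) = 0)) := by
  set D : ℕ → ℤ := fun n => q n - q (n + 1) with hD
  -- strict decrease before nr
  have hstrict : ∀ n : ℕ, n + 1 < nr → D (n + 1) < D n := by
    intro n hn
    rcases lt_or_eq_of_le (hdec n) with h | h
    · exact h
    · exfalso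
      have := hnrmin (n + 1) (Nat.le_add_left 1 n) (by simpa using h.symm)
      omega
  -- upper bound: D k ≤ a - k for k < nr
  have hub : ∀ k : ℕ, k < nr → D k ≤ (a : ℤ) - k := by
    intro k
    induction k with
    | zero => intro _; simp [hD, ha]
    | succ k ih =>
      intro hk
      have h1 := hstrict k hk
      have h2 := ih (by omega)
      push_cast
      omega
  have hub0 : D (nr - 1) ≤ (a : ℤ) - (nr - 1 : ℕ) := hub _ (by omega)
  have hnn : 0 ≤ D (nr - 1) := hnonneg _
  have hle : nr ≤ a + 1 := by
    have : ((nr - 1 : ℕ) : ℤ) ≤ a := by omega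
    have := Nat.cast_le (α := ℤ).mp (by exact_mod_cast this)
    omega
  refine ⟨hle, ?_, ?_⟩
  · -- nr = a + 1 → staircase
    intro hE
    -- lower bound: D k ≥ a - k for k ≤ a
    have hlb : ∀ m : ℕ, ∀ k : ℕ, k + m = a → (m : ℤ) ≤ D k := by
      intro m
      induction m with
      | zero => intro k hk; exact hnonneg k
      | succ m ih =>
        intro k hk
        have h1 := ih (k + 1) (by omega)
        have h2 := hstrict k (by omega)
        push_cast
        omega
    have hstair : ∀ n : ℕ, n ≤ a → D n = (a : ℤ) - n := by
      intro n hn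
      have h1 := hub n (by omega)
      have h2 := hlb (a - n) n (by omega)
      have : ((a - n : ℕ) : ℤ) = (a : ℤ) - n := by push_cast [hn]; ring
      omega
    refine ⟨hstair, ?_⟩
    have hDa : D a = 0 := by have := hstair a le_rfl; omega
    intro n hn
    induction n with
    | zero =>
      have : a = 0 := Nat.le_zero.mp hn
      simpa [this] using hDa
    | succ n ih =>
      rcases Nat.lt_or_ge a (n + 1) with h | h
      · have hDn : D n = 0 := ih (by omega)
        have h1 := hdec n
        have h2 : 0 ≤ q (n + 1) - q (n + 2) := hnonneg (n + 1)
        simp only [hD] at hDn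
        show q (n + 1) - q (n + 2) = 0
        omega
      · have : a = n + 1 := by omega
        simpa [this] using hDa
  · -- staircase → nr = a + 1
    rintro ⟨h1, h2⟩
    have hup : nr ≤ a + 1 := by
      apply hnrmin (a + 1) (by omega)
      have e1 : q (a + 1 - 1) - q (a + 1) = D a := by simp [hD]
      have e2 : D a = 0 := by
        have := h1 a le_rfl
        simp only [hD]
        omega
      have e3 : D (a + 1) = 0 := h2 (a + 1) (by omega)
      simp only [hD] at e2 e3
      rw [e1]; simp only [hD]; omega
    by_contra hne
    have hlt : nr < a + 1 := by omega
    -- then nr ≤ a, so D (nr-1) = a - (nr-1), D nr = a - nr, but they're equal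
    have e1 : D (nr - 1) = (a : ℤ) - (nr - 1 : ℕ) := h1 (nr - 1) (by omega)
    have e2 : D nr = (a : ℤ) - nr := h1 nr (by omega)
    have e3 : q (nr - 1) - q nr = D (nr - 1) := by
      have : nr - 1 + 1 = nr := by omega
      simp [hD, this]
    have hc : ((nr - 1 : ℕ) : ℤ) = (nr : ℤ) - 1 := by
      push_cast [hnr1]; ring
    simp only [hD] at e1 e2 e3
    rw [e3, e1, e2, hc] at hnr
    omega
end

section
/- Let A be a two-dimensional Cohen–Macaulay local ring, {I_n} a multiplicative filtration of m-primary ideals with I₀ = A, and Q = (a,b) ⊆ I₁ a minimal reduction generated by a regular sequence such that I_{n+1} = Q·I_n for all n ≥ 2 and I₂ ≠ Q·I₁ with ℓ_A(I₂/QI₁) = 1. If additionally I₂ = I₁², then I_n = I₁ⁿ for all n ≥ 2. Conversely, if I₂ ≠ I₁², then I₁² = Q·I₁ and ℓ_A(A/I_{n+1}) = ℓ_A(A/I₁^{n+1}) - n for all n ≥ 0, so I_n ≠ I₁ⁿ for all n ≥ 2. -/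
/-- `M` has length `n` as an `A`-module: there is a composition series from `⊥` to `⊤`
of length `n`. -/
def ModLength (A : Type*) (M : Type*) [CommRing A] [AddCommGroup M] [Module A M]
    (n : ℕ) : Prop :=
  ∃ c : CompositionSeries (Submodule A M), c.head = ⊥ ∧ c.last = ⊤ ∧ c.length = n

open Finset

section Alg
variable {A : Type*} [CommRing A]

lemma bpow_reg (a b : A) (hreg2 : ∀ x : A, b * x ∈ Ideal.span {a} → x ∈ Ideal.span {a}) :
    ∀ (m : ℕ) (z : A), b ^ m * z ∈ Ideal.span {a} → z ∈ Ideal.span {a} := by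
  intro m
  induction m with
  | zero => intro z hz; simpa using hz
  | succ m ih =>
    intro z hz
    apply ih
    apply hreg2
    have : b * (b ^ m * z) = b ^ (m + 1) * z := by ring
    rw [this]
    exact hz

lemma koszul (a b : A) (hreg1 : ∀ x : A, a * x = 0 → x = 0)
    (hreg2 : ∀ x : A, b * x ∈ Ideal.span {a} → x ∈ Ideal.span {a}) :
    ∀ (k : ℕ) (u : ℕ → A), (∑ j ∈ range (k + 1), a ^ j * b ^ (k - j) * u j) = 0 →
      ∀ j, j ≤ k → u j ∈ Ideal.span {a, b} := by
  intro k
  induction k with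
  | zero =>
    intro u h j hj
    interval_cases j
    have : u 0 = 0 := by simpa using h
    rw [this]; exact zero_mem _
  | succ k ih =>
    intro u h
    rw [Finset.sum_range_succ'] at h
    simp only [Nat.succ_sub_succ, pow_zero, one_mul, Nat.sub_zero] at h
    -- h : ∑ j ∈ range (k+1), a^(j+1) * b^(k-j) * u (j+1) + b^(k+1) * u 0 = 0
    have h0 : b ^ (k + 1) * u 0 ∈ Ideal.span {a} := by
      have heq : b ^ (k + 1) * u 0 =
          - ∑ j ∈ range (k + 1), a ^ (j + 1) * b ^ (k - j) * u (j + 1) :=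
        eq_neg_of_add_eq_zero_right h
      rw [heq]
      apply neg_mem
      apply Ideal.sum_mem
      intro j hj
      have : a ^ (j + 1) * b ^ (k - j) * u (j + 1)
          = a * (a ^ j * b ^ (k - j) * u (j + 1)) := by ring
      rw [this]
      exact Ideal.mul_mem_right _ _ (Ideal.mem_span_singleton_self a)
    have hu0 : u 0 ∈ Ideal.span {a} := bpow_reg a b hreg2 _ _ h0
    obtain ⟨u0', hu0'⟩ := Ideal.mem_span_singleton'.mp hu0
    set v : ℕ → A := fun j => u (j + 1) + if j = 0 then b * u0' else 0 with hv
    have key : (∑ j ∈ range (k + 1), a ^ j * b ^ (k - j) * v j) = 0 := by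
      apply hreg1
      rw [Finset.mul_sum]
      have expand : ∀ j ∈ range (k + 1),
          a * (a ^ j * b ^ (k - j) * v j) =
          a ^ (j + 1) * b ^ (k - j) * u (j + 1)
            + (if j = 0 then b ^ (k + 1) * u 0 else 0) := by
        intro j hj
        simp only [hv]
        split_ifs with hj0
        · subst hj0
          simp only [Nat.sub_zero]
          rw [← hu0']
          ring
        · ring
      rw [Finset.sum_congr rfl expand, Finset.sum_add_distrib, Finset.sum_ite_eq' (range (k+1)) 0
        (fun _ => b ^ (k + 1) * u 0)]
      simp only [Finset.mem_range, Nat.succ_pos, if_pos]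
      exact h
    have hb : b ∈ Ideal.span ({a, b} : Set A) := Ideal.subset_span (by simp)
    have ha : a ∈ Ideal.span ({a, b} : Set A) := Ideal.subset_span (by simp)
    intro j hj
    match j with
    | 0 =>
      have : Ideal.span {a} ≤ Ideal.span ({a, b} : Set A) :=
        Ideal.span_mono (by simp)
      exact this hu0
    | (j + 1) =>
      have hvj : v j ∈ Ideal.span ({a, b} : Set A) := ih v key j (by omega)
      have : u (j + 1) = v j - (if j = 0 then b * u0' else 0) := by simp only [hv]; ring
      rw [this]
      apply sub_mem hvj
      split
      · exact Ideal.mul_mem_right _ _ hb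
      · exact zero_mem _

lemma pow_decomp (a b : A) :
    ∀ (k : ℕ) (J : Ideal A) (y : A), y ∈ Ideal.span {a, b} ^ k * J →
      ∃ t : ℕ → A, (∀ j, t j ∈ J) ∧ y = ∑ j ∈ range (k + 1), a ^ j * b ^ (k - j) * t j := by
  intro k
  induction k with
  | zero =>
    intro J y hy
    refine ⟨fun _ => y, fun _ => by simpa using hy, by simp⟩
  | succ k ih =>
    intro J y hy
    have hQ : Ideal.span ({a, b} : Set A) = Ideal.span {a} ⊔ Ideal.span {b} := by
      rw [Ideal.span_insert]
    have hy' : y ∈ Ideal.span {a} * (Ideal.span ({a, b} : Set A) ^ k * J)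
        ⊔ Ideal.span {b} * (Ideal.span ({a, b} : Set A) ^ k * J) := by
      have : Ideal.span ({a, b} : Set A) ^ (k + 1) * J
          = (Ideal.span {a} ⊔ Ideal.span {b}) * (Ideal.span ({a, b} : Set A) ^ k * J) := by
        rw [← hQ, pow_succ, mul_comm (Ideal.span {a,b} ^ k), mul_assoc]
      rw [this, Ideal.sup_mul] at hy
      exact hy
    rw [Submodule.mem_sup] at hy'
    obtain ⟨y1, hy1, y2, hy2, rfl⟩ := hy'
    rw [Ideal.mem_span_singleton_mul] at hy1 hy2
    obtain ⟨z1, hz1, rfl⟩ := hy1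
    obtain ⟨z2, hz2, rfl⟩ := hy2
    obtain ⟨t, ht, rfl⟩ := ih J z1 hz1
    obtain ⟨s, hs, rfl⟩ := ih J z2 hz2
    refine ⟨fun j => (if j ≤ k then s j else 0) + (if j = 0 then 0 else t (j - 1)),
      fun j => add_mem (by split; exacts [hs j, zero_mem _]) (by split; exacts [zero_mem _, ht _]),
      ?_⟩
    have hsplit : ∀ j ∈ range (k + 2),
        a ^ j * b ^ (k + 1 - j) * ((if j ≤ k then s j else 0) + (if j = 0 then 0 else t (j - 1)))
        = (if j ≤ k then a ^ j * b ^ (k + 1 - j) * s j else 0)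
          + (if j = 0 then 0 else a ^ j * b ^ (k + 1 - j) * t (j - 1)) := by
      intro j hj
      split_ifs <;> ring
    rw [Finset.sum_congr rfl hsplit, Finset.sum_add_distrib]
    have e1 : (∑ j ∈ range (k + 2), if j ≤ k then a ^ j * b ^ (k + 1 - j) * s j else 0)
        = b * ∑ j ∈ range (k + 1), a ^ j * b ^ (k - j) * s j := by
      rw [Finset.sum_range_succ, if_neg (by omega), add_zero, Finset.mul_sum]
      apply Finset.sum_congr rfl
      intro j hj
      rw [Finset.mem_range] at hj
      rw [if_pos (by omega)]
      have : k + 1 - j = (k - j) + 1 := by omega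
      rw [this]
      ring
    have e2 : (∑ j ∈ range (k + 2), if j = 0 then 0 else a ^ j * b ^ (k + 1 - j) * t (j - 1))
        = a * ∑ j ∈ range (k + 1), a ^ j * b ^ (k - j) * t j := by
      rw [Finset.sum_range_succ', if_pos rfl, add_zero, Finset.mul_sum]
      apply Finset.sum_congr rfl
      intro j hj
      rw [if_neg (by omega)]
      simp only [Nat.add_sub_cancel, Nat.succ_sub_succ, Nat.sub_zero]
      ring
    rw [e1, e2]
    ring

lemma coeff_mem (a b : A) (hreg1 : ∀ x : A, a * x = 0 → x = 0)
    (hreg2 : ∀ x : A, b * x ∈ Ideal.span {a} → x ∈ Ideal.span {a})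
    (k : ℕ) (J : Ideal A) (u : ℕ → A)
    (h : (∑ j ∈ range (k + 1), a ^ j * b ^ (k - j) * u j) ∈ Ideal.span {a, b} ^ k * J) :
    ∀ j, j ≤ k → u j ∈ J ⊔ Ideal.span {a, b} := by
  obtain ⟨t, ht, heq⟩ := pow_decomp a b k J _ h
  have hz : (∑ j ∈ range (k + 1), a ^ j * b ^ (k - j) * (u j - t j)) = 0 := by
    have : ∀ j ∈ range (k+1), a ^ j * b ^ (k - j) * (u j - t j)
        = a ^ j * b ^ (k - j) * u j - a ^ j * b ^ (k - j) * t j := by intro j hj; ring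
    rw [Finset.sum_congr rfl this, Finset.sum_sub_distrib, ← heq, sub_self]
  intro j hj
  have := koszul a b hreg1 hreg2 k _ hz j hj
  have : u j = t j + (u j - t j) := by ring
  rw [this]
  exact Submodule.mem_sup.mpr ⟨t j, ht j, _, koszul a b hreg1 hreg2 k _ hz j hj, rfl⟩

lemma sum_shift (a b : A) (k : ℕ) (t s : ℕ → A) :
    (∑ j ∈ range (k + 2), a ^ j * b ^ (k + 1 - j) *
      ((if j ≤ k then s j else 0) + (if j = 0 then 0 else t (j - 1))))
    = a * (∑ j ∈ range (k + 1), a ^ j * b ^ (k - j) * t j)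
      + b * (∑ j ∈ range (k + 1), a ^ j * b ^ (k - j) * s j) := by
  have hsplit : ∀ j ∈ range (k + 2),
      a ^ j * b ^ (k + 1 - j) * ((if j ≤ k then s j else 0) + (if j = 0 then 0 else t (j - 1)))
      = (if j ≤ k then a ^ j * b ^ (k + 1 - j) * s j else 0)
        + (if j = 0 then 0 else a ^ j * b ^ (k + 1 - j) * t (j - 1)) := by
    intro j hj
    split_ifs <;> ring
  rw [Finset.sum_congr rfl hsplit, Finset.sum_add_distrib]
  have e1 : (∑ j ∈ range (k + 2), if j ≤ k then a ^ j * b ^ (k + 1 - j) * s j else 0)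
      = b * ∑ j ∈ range (k + 1), a ^ j * b ^ (k - j) * s j := by
    rw [Finset.sum_range_succ, if_neg (by omega), add_zero, Finset.mul_sum]
    apply Finset.sum_congr rfl
    intro j hj
    rw [Finset.mem_range] at hj
    rw [if_pos (by omega)]
    have : k + 1 - j = (k - j) + 1 := by omega
    rw [this]
    ring
  have e2 : (∑ j ∈ range (k + 2), if j = 0 then 0 else a ^ j * b ^ (k + 1 - j) * t (j - 1))
      = a * ∑ j ∈ range (k + 1), a ^ j * b ^ (k - j) * t j := by
    rw [Finset.sum_range_succ', if_pos rfl, add_zero, Finset.mul_sum]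
    apply Finset.sum_congr rfl
    intro j hj
    rw [if_neg (by omega)]
    simp only [Nat.add_sub_cancel, Nat.succ_sub_succ, Nat.sub_zero]
    ring
  rw [e1, e2]
  ring

lemma key_not_mem (a b : A) (hreg1 : ∀ x : A, a * x = 0 → x = 0)
    (hreg2 : ∀ x : A, b * x ∈ Ideal.span {a} → x ∈ Ideal.span {a})
    (I1 : Ideal A) (hQI : Ideal.span {a, b} ≤ I1)
    (x : A) (hx : x ∉ Ideal.span ({a, b} : Set A) * I1)
    (k i : ℕ) (hik : i ≤ k) (d : ℕ → A) (hdi : d i = 1) (hd0 : ∀ j, i < j → d j = 0)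
    (hmem : (∑ j ∈ range (k + 1), a ^ j * b ^ (k - j) * (d j * x))
      ∈ Ideal.span {a, b} ^ (k + 1) * I1) : False := by
  -- Step 1 : x ∈ span {a, b}
  have hle : Ideal.span ({a, b} : Set A) ^ (k + 1) * I1
      ≤ Ideal.span ({a, b} : Set A) ^ k * Ideal.span {a, b} := by
    rw [pow_succ]
    exact Ideal.mul_le_left
  have hxQ : x ∈ Ideal.span ({a, b} : Set A) := by
    have := coeff_mem a b hreg1 hreg2 k (Ideal.span {a, b}) (fun j => d j * x)
      (hle hmem) i hik
    rw [sup_idem] at this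
    simpa [hdi] using this
  rw [Ideal.mem_span_pair] at hxQ
  obtain ⟨γ, δ, hγδ⟩ := hxQ
  -- Step 2 : rewrite the sum in degree k+1
  have hsum : (∑ j ∈ range (k + 2), a ^ j * b ^ (k + 1 - j) *
      ((if j ≤ k then d j * δ else 0) + (if j = 0 then 0 else d (j - 1) * γ)))
      = ∑ j ∈ range (k + 1), a ^ j * b ^ (k - j) * (d j * x) := by
    rw [sum_shift a b k (fun j => d j * γ) (fun j => d j * δ), Finset.mul_sum, Finset.mul_sum,
      ← Finset.sum_add_distrib]
    apply Finset.sum_congr rfl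
    intro j hj
    rw [← hγδ]
    ring
  have hcoeff := coeff_mem a b hreg1 hreg2 (k + 1) I1
    (fun j => (if j ≤ k then d j * δ else 0) + (if j = 0 then 0 else d (j - 1) * γ))
    (by rw [hsum]; exact hmem)
  rw [sup_eq_left.mpr hQI] at hcoeff
  -- γ ∈ I1
  have hγ : γ ∈ I1 := by
    have := hcoeff (i + 1) (by omega)
    simp only [if_neg (Nat.succ_ne_zero i), Nat.add_sub_cancel, hdi, one_mul] at this
    rcases le_or_gt (i + 1) k with h | h
    · rw [if_pos h, hd0 (i + 1) (by omega), zero_mul, zero_add] at this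
      exact this
    · rw [if_neg (by omega), zero_add] at this
      exact this
  -- δ ∈ I1
  have hδ : δ ∈ I1 := by
    have hi := hcoeff i (by omega)
    simp only [if_pos hik, hdi, one_mul] at hi
    have hmem2 : (if i = 0 then (0:A) else d (i - 1) * γ) ∈ I1 := by
      split
      · exact zero_mem _
      · exact Ideal.mul_mem_left _ _ hγ
    have : δ = (δ + (if i = 0 then (0:A) else d (i - 1) * γ))
        - (if i = 0 then (0:A) else d (i - 1) * γ) := by ring
    rw [this]
    exact sub_mem hi hmem2
  -- contradiction
  apply hx
  rw [← hγδ]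
  apply add_mem
  · rw [mul_comm γ a]
    exact Ideal.mul_mem_mul (Ideal.subset_span (by simp)) hγ
  · rw [mul_comm δ b]
    exact Ideal.mul_mem_mul (Ideal.subset_span (by simp)) hδ

lemma mono_mem_pow (a b : A) (m j : ℕ) (hj : j ≤ m) :
    a ^ j * b ^ (m - j) ∈ Ideal.span ({a, b} : Set A) ^ m := by
  have ha : a ∈ Ideal.span ({a, b} : Set A) := Ideal.subset_span (by simp)
  have hb : b ∈ Ideal.span ({a, b} : Set A) := Ideal.subset_span (by simp)
  have := Ideal.mul_mem_mul (Ideal.pow_mem_pow ha j) (Ideal.pow_mem_pow hb (m - j))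
  rwa [← pow_add, Nat.add_sub_cancel' hj] at this

lemma pow_span_le (a b x : A) :
    ∀ m, Ideal.span ({a, b} : Set A) ^ m * Ideal.span {x}
      ≤ Ideal.span ((fun j => a ^ j * b ^ (m - j) * x) '' Set.Iic m) := by
  intro m
  induction m with
  | zero =>
    rw [pow_zero, one_mul]
    rw [Ideal.span_le]
    intro z hz
    rw [Set.mem_singleton_iff] at hz
    subst hz
    apply Ideal.subset_span
    exact ⟨0, by simp, by simp⟩
  | succ m ih =>
    have step : Ideal.span ({a, b} : Set A) *
        Ideal.span ((fun j => a ^ j * b ^ (m - j) * x) '' Set.Iic m)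
        ≤ Ideal.span ((fun j => a ^ j * b ^ (m + 1 - j) * x) '' Set.Iic (m + 1)) := by
      set T := Ideal.span ((fun j => a ^ j * b ^ (m + 1 - j) * x) '' Set.Iic (m + 1)) with hT
      have hA : ∀ s ∈ Ideal.span ((fun j => a ^ j * b ^ (m - j) * x) '' Set.Iic m), a * s ∈ T := by
        intro s hs
        induction hs using Submodule.span_induction with
        | mem z hz =>
          obtain ⟨j, hj, rfl⟩ := hz
          apply Ideal.subset_span
          refine ⟨j + 1, by simpa using Nat.succ_le_succ hj, ?_⟩
          have : m + 1 - (j + 1) = m - j := by omega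
          dsimp only
          rw [this]
          ring
        | zero => rw [mul_zero]; exact zero_mem _
        | add y z _ _ hy hz => rw [mul_add]; exact add_mem hy hz
        | smul c y _ hy =>
          rw [smul_eq_mul, mul_comm c y, ← mul_assoc]
          exact Ideal.mul_mem_right _ _ hy
      have hB : ∀ s ∈ Ideal.span ((fun j => a ^ j * b ^ (m - j) * x) '' Set.Iic m), b * s ∈ T := by
        intro s hs
        induction hs using Submodule.span_induction with
        | mem z hz =>
          obtain ⟨j, hj, rfl⟩ := hz
          apply Ideal.subset_span
          refine ⟨j, by simpa using Nat.le_succ_of_le hj, ?_⟩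
          have : m + 1 - j = (m - j) + 1 := by
            simp only [Set.mem_Iic] at hj
            omega
          dsimp only
          rw [this]
          ring
        | zero => rw [mul_zero]; exact zero_mem _
        | add y z _ _ hy hz => rw [mul_add]; exact add_mem hy hz
        | smul c y _ hy =>
          rw [smul_eq_mul, mul_comm c y, ← mul_assoc]
          exact Ideal.mul_mem_right _ _ hy
      rw [Ideal.mul_le]
      intro r hr s hs
      rw [Ideal.mem_span_pair] at hr
      obtain ⟨u, v, rfl⟩ := hr
      have : (u * a + v * b) * s = u * (a * s) + v * (b * s) := by ring
      rw [this]
      exact add_mem (Ideal.mul_mem_left _ _ (hA s hs)) (Ideal.mul_mem_left _ _ (hB s hs))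
    calc Ideal.span ({a, b} : Set A) ^ (m + 1) * Ideal.span {x}
        = Ideal.span ({a, b} : Set A) * (Ideal.span ({a, b} : Set A) ^ m * Ideal.span {x}) := by
          rw [pow_succ, mul_comm (Ideal.span {a,b} ^ m), mul_assoc]
      _ ≤ Ideal.span ({a, b} : Set A) *
          Ideal.span ((fun j => a ^ j * b ^ (m - j) * x) '' Set.Iic m) :=
            Ideal.mul_mono_right ih
      _ ≤ _ := step

def chainI (base : Ideal A) (f : ℕ → A) : ℕ → Ideal A
  | 0 => base
  | (i + 1) => chainI base f i ⊔ Ideal.span {f i}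

lemma chainI_mono (base : Ideal A) (f : ℕ → A) : Monotone (chainI base f) := by
  apply monotone_nat_of_le_succ
  intro i
  exact le_sup_left

lemma chainI_base_le (base : Ideal A) (f : ℕ → A) (i : ℕ) : base ≤ chainI base f i :=
  chainI_mono base f (Nat.zero_le i)

lemma chainI_gen_mem (base : Ideal A) (f : ℕ → A) {j i : ℕ} (h : j < i) :
    f j ∈ chainI base f i := by
  have : f j ∈ chainI base f (j + 1) :=
    Submodule.mem_sup_right (Ideal.mem_span_singleton_self (f j))
  exact chainI_mono base f h this

lemma chainI_le (base : Ideal A) (f : ℕ → A) (K : Ideal A) (hbase : base ≤ K) :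
    ∀ i, (∀ j, j < i → f j ∈ K) → chainI base f i ≤ K := by
  intro i
  induction i with
  | zero => intro _; exact hbase
  | succ i ih =>
    intro h
    apply sup_le (ih fun j hj => h j (by omega))
    rw [Ideal.span_le]
    intro z hz
    rw [Set.mem_singleton_iff] at hz
    subst hz
    exact h i (by omega)

lemma chainI_mem (base : Ideal A) (f : ℕ → A) :
    ∀ i y, y ∈ chainI base f i → ∃ c : ℕ → A, y - ∑ j ∈ range i, c j * f j ∈ base := by
  intro i
  induction i with
  | zero => intro y hy; exact ⟨fun _ => 0, by simpa [chainI] using hy⟩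
  | succ i ih =>
    intro y hy
    rw [chainI, Submodule.mem_sup] at hy
    obtain ⟨y1, hy1, z, hz, rfl⟩ := hy
    rw [Ideal.mem_span_singleton'] at hz
    obtain ⟨c', rfl⟩ := hz
    obtain ⟨c, hc⟩ := ih y1 hy1
    refine ⟨fun j => if j = i then c' else c j, ?_⟩
    rw [Finset.sum_range_succ]
    dsimp only
    rw [if_pos rfl]
    have : (∑ j ∈ range i, (if j = i then c' else c j) * f j) = ∑ j ∈ range i, c j * f j := by
      apply Finset.sum_congr rfl
      intro j hj
      rw [Finset.mem_range] at hj
      rw [if_neg (by omega)]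
    rw [this]
    have heq : y1 + c' * f i - (∑ j ∈ range i, c j * f j + c' * f i)
        = y1 - ∑ j ∈ range i, c j * f j := by ring
    rw [heq]
    exact hc

end Alg

section Length

/-- covering by adjoining a socle element -/
lemma cov_span_singleton {A : Type*} [CommRing A] [IsLocalRing A] (K : Ideal A) (y : A)
    (hy : y ∉ K) (hm : ∀ z ∈ IsLocalRing.maximalIdeal A, z * y ∈ K) :
    K ⋖ K ⊔ Ideal.span {y} := by
  constructor
  · exact left_lt_sup.mpr fun h => hy (h (Ideal.mem_span_singleton_self y))
  · intro W hKW hW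
    obtain ⟨w, hwW, hwK⟩ := SetLike.exists_of_lt hKW
    have hw2 : w ∈ K ⊔ Ideal.span {y} := hW.le hwW
    rw [Submodule.mem_sup] at hw2
    obtain ⟨u, hu, z, hz, rfl⟩ := hw2
    rw [Ideal.mem_span_singleton'] at hz
    obtain ⟨cc, rfl⟩ := hz
    have hcc : IsUnit cc := by
      by_contra hcu
      exact hwK (add_mem hu (hm cc (by rwa [IsLocalRing.mem_maximalIdeal, mem_nonunits_iff]) ))
    obtain ⟨v, hv⟩ := isUnit_iff_exists_inv.mp hcc
    have hyW : y ∈ W := by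
      have h1 : cc * y ∈ W := by
        have : cc * y = (u + cc * y) - u := by ring
        rw [this]
        exact sub_mem hwW (hKW.le hu)
      have : y = v * (cc * y) := by rw [← mul_assoc, mul_comm v cc, hv, one_mul]
      rw [this]
      exact Ideal.mul_mem_left _ _ h1
    exact hW.not_ge (sup_le hKW.le (by rwa [Ideal.span_le, Set.singleton_subset_iff]))

lemma covby_subtype_iff {α : Type*} [PartialOrder α] {p : α} {x y : {z : α // p ≤ z}} :
    x ⋖ y ↔ (x : α) ⋖ (y : α) := by
  constructor
  · intro h
    refine ⟨Subtype.coe_lt_coe.mpr h.lt, ?_⟩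
    intro c hc1 hc2
    have hc : p ≤ c := x.2.trans hc1.le
    exact h.2 (show x < ⟨c, hc⟩ from Subtype.mk_lt_mk.mpr hc1)
      (show (⟨c, hc⟩ : {z : α // p ≤ z}) < y from Subtype.mk_lt_mk.mpr hc2)
  · intro h
    refine ⟨Subtype.coe_lt_coe.mp h.lt, ?_⟩
    intro c hc1 hc2
    exact h.2 (Subtype.coe_lt_coe.mpr hc1) (Subtype.coe_lt_coe.mpr hc2)

lemma modLength_unique {A M : Type*} [CommRing A] [AddCommGroup M] [Module A M] {n m : ℕ}
    (h1 : ModLength A M n) (h2 : ModLength A M m) : n = m := by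
  obtain ⟨c1, hh1, hl1, rfl⟩ := h1
  obtain ⟨c2, hh2, hl2, rfl⟩ := h2
  exact (CompositionSeries.jordan_holder c1 c2 (by rw [hh1, hh2]) (by rw [hl1, hl2])).length_eq

section
variable {A : Type*} [CommRing A] (p q : Ideal A)

lemma map_comap_mkQ_self (W : Submodule A (A ⧸ p)) :
    Submodule.map p.mkQ (Submodule.comap p.mkQ W) = W :=
  Submodule.map_comap_eq_self (by rw [Submodule.range_mkQ]; exact le_top)

lemma comap_map_mkQ_self {J : Ideal A} (hJ : p ≤ J) :
    Submodule.comap p.mkQ (Submodule.map p.mkQ J) = J := by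
  rw [Submodule.comap_map_mkQ, sup_eq_right.mpr hJ]

lemma le_comap_mkQ' (N : Submodule A (A ⧸ p)) : p ≤ Submodule.comap p.mkQ N := by
  conv_lhs => rw [← Submodule.ker_mkQ p]
  exact LinearMap.ker_le_comap (p := N) (Submodule.mkQ p)

lemma map_mkQ_covby {J K : Ideal A} (hpJ : p ≤ J) (h : J ⋖ K) :
    Submodule.map p.mkQ J ⋖ Submodule.map p.mkQ K := by
  have hpK : p ≤ K := hpJ.trans h.le
  constructor
  · refine lt_of_le_of_ne (Submodule.map_mono h.le) fun he => ?_
    have := congrArg (Submodule.comap p.mkQ) he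
    rw [comap_map_mkQ_self p hpJ, comap_map_mkQ_self p hpK] at this
    exact h.lt.ne this
  · intro W h1 h2
    have hW1 : J < Submodule.comap p.mkQ W := by
      refine lt_of_le_of_ne ?_ fun he => ?_
      · rw [← comap_map_mkQ_self p hpJ]
        exact Submodule.comap_mono h1.le
      · apply h1.ne
        rw [he, map_comap_mkQ_self]
    have hW2 : Submodule.comap p.mkQ W < K := by
      refine lt_of_le_of_ne ?_ fun he => ?_
      · have := Submodule.comap_mono (f := Submodule.mkQ p) h2.le
        rwa [comap_map_mkQ_self p hpK] at this
      · apply h2.ne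
        rw [← he, map_comap_mkQ_self]
    exact h.2 hW1 hW2

lemma comap_mkQ_covby {N N' : Submodule A (A ⧸ q)} (h : N ⋖ N') :
    Submodule.comap q.mkQ N ⋖ Submodule.comap q.mkQ N' := by
  constructor
  · refine lt_of_le_of_ne (Submodule.comap_mono h.le) fun he => ?_
    apply h.lt.ne
    rw [← map_comap_mkQ_self q N, ← map_comap_mkQ_self q N', he]
  · intro W h1 h2
    have hqW : q ≤ W := (le_comap_mkQ' q N).trans h1.le
    have hW1 : N < Submodule.map q.mkQ W := by
      refine lt_of_le_of_ne ?_ fun he => ?_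
      · rw [← map_comap_mkQ_self q N]
        exact Submodule.map_mono h1.le
      · apply h1.ne
        have := congrArg (Submodule.comap q.mkQ) he
        rwa [comap_map_mkQ_self q hqW] at this
    have hW2 : Submodule.map q.mkQ W < N' := by
      refine lt_of_le_of_ne ?_ fun he => ?_
      · rw [← map_comap_mkQ_self q N']
        exact Submodule.map_mono h2.le
      · apply h2.ne
        rw [← he, comap_map_mkQ_self q hqW]
    exact h.2 hW1 hW2

end

lemma modLength_of_chain {A : Type*} [CommRing A] (p q : Ideal A) (n la : ℕ)
    (g : ℕ → Ideal A) (hg0 : g 0 = p) (hgn : g n = q)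
    (hstep : ∀ i, i < n → g i ⋖ g (i + 1))
    (h : ModLength A (A ⧸ q) la) : ModLength A (A ⧸ p) (n + la) := by
  classical
  have hmono : ∀ j, j ≤ n → ∀ i, i ≤ j → g i ≤ g j := by
    intro j
    induction j with
    | zero => intro _ i hi; interval_cases i; exact le_rfl
    | succ j ih =>
      intro hj i hi
      rcases Nat.lt_or_ge i (j + 1) with h' | h'
      · exact (ih (by omega) i (by omega)).trans (hstep j (by omega)).le
      · have hij : i = j + 1 := by omega
        subst hij
        exact le_rfl
  have hp_le : ∀ i, i ≤ n → p ≤ g i := by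
    intro i hi
    rw [← hg0]
    exact hmono i hi 0 (Nat.zero_le i)
  have hpq : p ≤ q := by rw [← hgn]; exact hp_le n le_rfl
  obtain ⟨s, hsh, hsl, hslen⟩ := h
  have hF2cov : ∀ N N' : Submodule A (A ⧸ q), N ⋖ N' →
      Submodule.map p.mkQ (Submodule.comap q.mkQ N)
        ⋖ Submodule.map p.mkQ (Submodule.comap q.mkQ N') := by
    intro N N' hNN
    exact map_mkQ_covby p (hpq.trans (le_comap_mkQ' q N)) (comap_mkQ_covby q hNN)
  have hgcovmap : ∀ i, i < n →
      Submodule.map p.mkQ (g i) ⋖ Submodule.map p.mkQ (g (i + 1)) := by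
    intro i hi
    exact map_mkQ_covby p (hp_le i (by omega)) (hstep i hi)
  refine ⟨RelSeries.smash
    ({ length := n
       toFun := fun i => Submodule.map p.mkQ (g i)
       step := fun i => by
         simp only [Fin.coe_castSucc, Fin.val_succ]
         exact hgcovmap i i.2 } : CompositionSeries (Submodule A (A ⧸ p)))
    (s.map ⟨fun N => Submodule.map p.mkQ (Submodule.comap q.mkQ N),
        fun {N N'} h => hF2cov N N' h⟩)
    (by
      show Submodule.map p.mkQ (g n) = Submodule.map p.mkQ (Submodule.comap q.mkQ s.head)
      rw [hsh, Submodule.comap_bot, Submodule.ker_mkQ, hgn]), ?_, ?_, ?_⟩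
  · rw [RelSeries.head_smash]
    show Submodule.map p.mkQ (g 0) = ⊥
    rw [hg0, Submodule.mkQ_map_self]
  · rw [RelSeries.last_smash, RelSeries.last_map]
    show Submodule.map p.mkQ (Submodule.comap q.mkQ s.last) = ⊤
    rw [hsl, Submodule.comap_top, Submodule.map_top, Submodule.range_mkQ]
  · show n + s.length = n + la
    rw [hslen]

end Length

/-- Abstracts Proposition 3.15: for a filtration `{Iₙ}` (the normal filtration of a
strongly elliptic ideal `I = I₁`) with minimal reduction `Q = (a,b)` such that
`I_{n+1} = Q·I_n` for `n ≥ 2` and `ℓ(I₂/QI₁) = 1` (i.e. `QI₁ ⋖ I₂`): if `I₂ = I₁²` then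
`Iₙ = I₁ⁿ` for all `n ≥ 2`; and if `I₂ ≠ I₁²` then `I₁² = QI₁`,
`ℓ(A/I_{n+1}) = ℓ(A/I₁^{n+1}) - n` for all `n ≥ 0`, and `Iₙ ≠ I₁ⁿ` for all `n ≥ 2`. -/
theorem stmt_19 {A : Type*} [CommRing A] [IsLocalRing A] [IsNoetherianRing A]
    (hdim : ringKrullDim A = 2)
    (a b : A)
    (hreg1 : ∀ x : A, a * x = 0 → x = 0)
    (hreg2 : ∀ x : A, b * x ∈ Ideal.span {a} → x ∈ Ideal.span {a})
    (Q : Ideal A) (hQ : Q = Ideal.span {a, b})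
    (I : ℕ → Ideal A) (hI0 : I 0 = ⊤) (hdecr : ∀ n, I (n + 1) ≤ I n)
    (hmul : ∀ m n, I m * I n ≤ I (m + n))
    (hprim : ∀ n, 1 ≤ n → (I n).radical = IsLocalRing.maximalIdeal A)
    (hQI : Q ≤ I 1)
    (hred : ∀ n : ℕ, 2 ≤ n → I (n + 1) = Q * I n)
    (hne : I 2 ≠ Q * I 1)
    -- ℓ(I₂/QI₁) = 1
    (hlen : Q * I 1 ⋖ I 2) :
    (I 2 = I 1 ^ 2 → ∀ n : ℕ, 2 ≤ n → I n = I 1 ^ n) ∧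
    (I 2 ≠ I 1 ^ 2 →
      I 1 ^ 2 = Q * I 1 ∧
      (∀ n la lb : ℕ, ModLength A (A ⧸ I (n + 1)) la →
        ModLength A (A ⧸ (I 1) ^ (n + 1)) lb → (la : ℤ) = (lb : ℤ) - n) ∧
      ∀ n : ℕ, 2 ≤ n → I n ≠ I 1 ^ n) := by
  constructor
  · -- first conjunct
    intro h2 n hn
    induction n, hn using Nat.le_induction with
    | base => rw [h2]
    | succ n hn ih =>
      apply le_antisymm
      · rw [hred n hn, ih, pow_succ, mul_comm (I 1 ^ n) (I 1)]
        exact Ideal.mul_mono hQI le_rfl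
      · rw [pow_succ, ← ih]
        exact hmul n 1
  · intro hne2
    have hle1 : Q * I 1 ≤ I 1 ^ 2 := by rw [sq]; exact Ideal.mul_mono hQI le_rfl
    have hle2 : I 1 ^ 2 ≤ I 2 := by rw [sq]; exact hmul 1 1
    have h21 : I 1 ^ 2 = Q * I 1 := by
      rcases hlen.eq_or_eq hle1 hle2 with h | h
      · exact h
      · exact (hne2 h.symm).elim
    refine ⟨h21, ?_⟩
    subst hQ
    obtain ⟨x, hx2, hxQ⟩ := SetLike.exists_of_lt hlen.lt
    -- socle property
    have hsoc : IsLocalRing.maximalIdeal A * I 2 ≤ Ideal.span {a, b} * I 1 := by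
      rcases hlen.eq_or_eq (le_sup_left :
          Ideal.span {a, b} * I 1 ≤ Ideal.span {a, b} * I 1 ⊔ IsLocalRing.maximalIdeal A * I 2)
          (sup_le hlen.le Ideal.mul_le_right) with h | h
      · rw [← h]; exact le_sup_right
      · exfalso
        apply hne
        refine le_antisymm ?_ hlen.le
        apply Submodule.le_of_le_smul_of_le_jacobson_bot (IsNoetherian.noetherian (I 2))
          (IsLocalRing.maximalIdeal_le_jacobson ⊥)
        rw [smul_eq_mul]
        exact h.symm.le
    -- I 2 = Q * I 1 ⊔ (x)
    have hxspan : I 2 = Ideal.span {a, b} * I 1 ⊔ Ideal.span {x} := by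
      rcases hlen.eq_or_eq (le_sup_left :
          Ideal.span {a, b} * I 1 ≤ Ideal.span {a, b} * I 1 ⊔ Ideal.span {x})
          (sup_le hlen.le (by rwa [Ideal.span_le, Set.singleton_subset_iff])) with h | h
      · exfalso
        apply hxQ
        rw [← h]
        exact Submodule.mem_sup_right (Ideal.mem_span_singleton_self x)
      · exact h.symm
    have hI_eq : ∀ m, I (m + 2) = Ideal.span ({a, b} : Set A) ^ m * I 2 := by
      intro m
      induction m with
      | zero => rw [pow_zero, one_mul]
      | succ m ih =>
        rw [show m + 1 + 2 = (m + 2) + 1 by omega, hred (m + 2) (by omega), ih,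
          pow_succ, mul_comm (Ideal.span {a, b} ^ m) (Ideal.span {a, b}), mul_assoc]
    have hpow : ∀ m, I 1 ^ (m + 1) = Ideal.span ({a, b} : Set A) ^ m * I 1 := by
      intro m
      induction m with
      | zero => rw [pow_zero, one_mul, pow_one]
      | succ m ih =>
        calc I 1 ^ (m + 2) = I 1 ^ (m + 1) * I 1 := pow_succ _ _
          _ = Ideal.span {a, b} ^ m * I 1 * I 1 := by rw [ih]
          _ = Ideal.span {a, b} ^ m * (I 1 * I 1) := by rw [mul_assoc]
          _ = Ideal.span {a, b} ^ m * (I 1 ^ 2) := by rw [← sq]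
          _ = Ideal.span {a, b} ^ m * (Ideal.span {a, b} * I 1) := by rw [h21]
          _ = Ideal.span {a, b} ^ m * Ideal.span {a, b} * I 1 := by rw [mul_assoc]
          _ = Ideal.span {a, b} ^ (m + 1) * I 1 := by rw [← pow_succ]
    have hknm : ∀ (k i : ℕ), i ≤ k → ∀ d : ℕ → A, d i = 1 → (∀ j, i < j → d j = 0) →
        (∑ j ∈ Finset.range (k + 1), a ^ j * b ^ (k - j) * (d j * x))
          ∈ Ideal.span ({a, b} : Set A) ^ (k + 1) * I 1 → False :=
      fun k i hik d hdi hd0 hm =>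
        key_not_mem a b hreg1 hreg2 (I 1) hQI x hxQ k i hik d hdi hd0 hm
    constructor
    · -- the length statement
      intro n la lb hla hlb
      rcases n with _ | m
      · rw [pow_one] at hlb
        have := modLength_unique hla hlb
        subst this
        simp
      · -- n = m + 1
        set f : ℕ → A := fun j => a ^ j * b ^ (m - j) * x with hf
        set base : Ideal A := Ideal.span ({a, b} : Set A) ^ (m + 1) * I 1 with hbase
        have hbase_eq : Ideal.span ({a, b} : Set A) ^ m * (Ideal.span ({a, b} : Set A) * I 1)
            = base := by rw [hbase, pow_succ, mul_assoc]
        have hg0 : chainI base f 0 = I 1 ^ (m + 1 + 1) := by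
          show base = I 1 ^ (m + 2)
          rw [hpow (m + 1)]
        have hgn : chainI base f (m + 1) = I (m + 1 + 1) := by
          apply le_antisymm
          · apply chainI_le
            · rw [show m + 1 + 1 = m + 2 from rfl, hI_eq m, ← hbase_eq]
              exact Ideal.mul_mono_right (hle1.trans hle2)
            · intro j hj
              rw [show m + 1 + 1 = m + 2 from rfl, hI_eq m]
              exact Ideal.mul_mem_mul (mono_mem_pow a b m j (by omega)) hx2
          · rw [show m + 1 + 1 = m + 2 from rfl, hI_eq m, hxspan, Ideal.mul_sup]
            apply sup_le
            · rw [hbase_eq]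
              exact chainI_base_le base f (m + 1)
            · refine (pow_span_le a b x m).trans ?_
              rw [Ideal.span_le]
              rintro z ⟨j, hj, rfl⟩
              simp only [Set.mem_Iic] at hj
              exact chainI_gen_mem base f (show j < m + 1 by omega)
        have hstep : ∀ i, i < m + 1 → chainI base f i ⋖ chainI base f (i + 1) := by
          intro i hi
          have hnot : f i ∉ chainI base f i := by
            intro hmem
            obtain ⟨c, hc⟩ := chainI_mem base f i (f i) hmem
            set d : ℕ → A := fun j => if j = i then 1 else if j < i then -(c j) else 0 with hd
            have hsum : (∑ j ∈ Finset.range (m + 1), a ^ j * b ^ (m - j) * (d j * x))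
                = f i - ∑ j ∈ Finset.range i, c j * f j := by
              have hterm : ∀ j ∈ Finset.range (m + 1),
                  a ^ j * b ^ (m - j) * (d j * x)
                  = (if j = i then f i else 0) + (if j < i then -(c j * f j) else 0) := by
                intro j hj
                simp only [hd]
                by_cases h1 : j = i
                · subst h1
                  rw [if_pos rfl, if_pos rfl, if_neg (lt_irrefl j), add_zero, hf]
                  ring
                · rw [if_neg h1, if_neg h1]
                  by_cases h2 : j < i
                  · rw [if_pos h2, if_pos h2, zero_add, hf]
                    ring
                  · rw [if_neg h2, if_neg h2, zero_add, zero_mul, mul_zero]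
              rw [Finset.sum_congr rfl hterm, Finset.sum_add_distrib,
                Finset.sum_ite_eq' (Finset.range (m + 1)) i (fun _ => f i),
                if_pos (Finset.mem_range.mpr hi)]
              have hsecond : (∑ j ∈ Finset.range (m + 1), if j < i then -(c j * f j) else 0)
                  = ∑ j ∈ Finset.range i, -(c j * f j) := by
                rw [← Finset.sum_subset (Finset.range_subset_range.mpr (by omega : i ≤ m + 1))
                  (fun j _ hj => if_neg (by simpa using hj))]
                apply Finset.sum_congr rfl
                intro j hj
                rw [if_pos (Finset.mem_range.mp hj)]
              rw [hsecond, Finset.sum_neg_distrib, ← sub_eq_add_neg]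
            apply hknm m i (by omega) d (by simp [hd]) ?_ ?_
            · intro j hj
              simp only [hd]
              rw [if_neg (by omega : ¬ j = i), if_neg (by omega : ¬ j < i)]
            · rw [hsum]
              exact hc
          have hm_soc : ∀ z ∈ IsLocalRing.maximalIdeal A, z * f i ∈ chainI base f i := by
            intro z hz
            have h1 : z * x ∈ Ideal.span ({a, b} : Set A) * I 1 :=
              hsoc (Ideal.mul_mem_mul hz hx2)
            have h2 : z * f i = (a ^ i * b ^ (m - i)) * (z * x) := by rw [hf]; ring
            have h3 : z * f i ∈ Ideal.span ({a, b} : Set A) ^ m *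
                (Ideal.span ({a, b} : Set A) * I 1) := by
              rw [h2]
              exact Ideal.mul_mem_mul (mono_mem_pow a b m i (by omega)) h1
            rw [hbase_eq] at h3
            exact chainI_base_le base f i h3
          have := cov_span_singleton (chainI base f i) (f i) hnot hm_soc
          exact this
        have hml := modLength_of_chain (I 1 ^ (m + 1 + 1)) (I (m + 1 + 1)) (m + 1) la
          (chainI base f) hg0 hgn hstep hla
        have hlb' := modLength_unique hlb hml
        have : lb = m + 1 + la := hlb'
        omega
    · -- I n ≠ I 1 ^ n for n ≥ 2
      intro n hn heq
      obtain ⟨mm, rfl⟩ : ∃ mm, n = mm + 2 := ⟨n - 2, by omega⟩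
      have h1 : a ^ 0 * b ^ (mm - 0) * x ∈ Ideal.span ({a, b} : Set A) ^ mm * I 2 :=
        Ideal.mul_mem_mul (mono_mem_pow a b mm 0 (Nat.zero_le _)) hx2
      rw [← hI_eq mm, heq, hpow (mm + 1)] at h1
      apply hknm mm 0 (Nat.zero_le _) (fun j => if j = 0 then 1 else 0) (by simp)
        (fun j hj => by
          show (if j = 0 then (1:A) else 0) = 0
          rw [if_neg (by omega)]) ?_
      have hsum : (∑ j ∈ Finset.range (mm + 1), a ^ j * b ^ (mm - j) *
          ((if j = 0 then (1:A) else 0) * x)) = a ^ 0 * b ^ (mm - 0) * x := by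
        rw [Finset.sum_eq_single_of_mem 0 (Finset.mem_range.mpr (by omega))]
        · rw [if_pos rfl, one_mul]
        · intro j _ hjne
          rw [if_neg hjne, zero_mul, mul_zero]
      rw [hsum]
      exact h1
end
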